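/- arXiv:1206.0330 — 8 statements merged into one kernel-verified Lean document; each statement's English description precedes it below -/
import Mathlib

section
/- For any 2×2 unitary matrix U, the absolute value of the (1,1) entry of U·diag(-1,1)·U†·diag(-1,1)·U equals |cos(3·arccos|U₁₁|)|; equivalently, |⟨0| U Z U† Z U |0⟩| = |4|U₀₀|³ - 3|U₀₀||, where Z = diag(-1,1). -/
open Matrix Complex

/- With `Z = diag(-1, 1)` and `u = (a, c)` the first column of `U`, unitarity gives
`U Z Uᴴ = 1 - 2 u uᴴ` and `uᴴ Z u = 1 - 2|a|²`, so the `(0,0)` entry of `U Z Uᴴ Z U` is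
`-a - 2a(1 - 2|a|²) = a(4|a|² - 3)`. Its modulus is
`|4t³ - 3t| = |cos 3θ|` for `t = |a| = cos θ`. -/

theorem Real.cos_three_mul_arccos {x : ℝ} (hx₁ : -1 ≤ x) (hx₂ : x ≤ 1) :
    Real.cos (3 * Real.arccos x) = 4 * x ^ 3 - 3 * x := by
  rw [Real.cos_three_mul, Real.cos_arccos hx₁ hx₂]

theorem Complex.norm_mul_four_normSq_sub_three (a : ℂ) :
    ‖a * (4 * (normSq a : ℂ) - 3)‖ = |4 * ‖a‖ ^ 3 - 3 * ‖a‖| := by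
  have h : 4 * (normSq a : ℂ) - 3 = ((4 * ‖a‖ ^ 2 - 3 : ℝ) : ℂ) := by
    push_cast [← Complex.sq_norm]; ring
  rw [norm_mul, h, Complex.norm_real, Real.norm_eq_abs,
    show 4 * ‖a‖ ^ 3 - 3 * ‖a‖ = ‖a‖ * (4 * ‖a‖ ^ 2 - 3) by ring, abs_mul, abs_norm]

theorem Matrix.unitaryGroup_mul_diag_mul_conjTranspose_mul_diag_mul_apply_zero_zero
    {U : Matrix (Fin 2) (Fin 2) ℂ} (hU : U ∈ unitaryGroup (Fin 2) ℂ) :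
    (U * !![(-1 : ℂ), 0; 0, 1] * Uᴴ * !![(-1 : ℂ), 0; 0, 1] * U) 0 0
      = U 0 0 * (4 * (normSq (U 0 0) : ℂ) - 3) := by
  have hrow := mem_unitaryGroup_iff.mp hU
  have hcol := mem_unitaryGroup_iff'.mp hU
  have row₀ : U 0 0 * star (U 0 0) + U 0 1 * star (U 0 1) = 1 := by
    simpa [mul_apply, Fin.sum_univ_two] using congr_fun₂ hrow 0 0
  have rows₀₁ : U 0 0 * star (U 1 0) + U 0 1 * star (U 1 1) = 0 := by
    simpa [mul_apply, Fin.sum_univ_two] using congr_fun₂ hrow 0 1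
  have col₀ : star (U 0 0) * U 0 0 + star (U 1 0) * U 1 0 = 1 := by
    simpa [mul_apply, Fin.sum_univ_two] using congr_fun₂ hcol 0 0
  have hnormSq : (normSq (U 0 0) : ℂ) = U 0 0 * star (U 0 0) := by
    rw [normSq_eq_conj_mul_self, mul_comm]; rfl
  simp only [mul_apply, Fin.sum_univ_two, conjTranspose_apply, of_apply, cons_val',
    cons_val_zero, cons_val_one, empty_val', cons_val_fin_one, hnormSq]
  linear_combination (-U 0 0) * row₀ + U 1 0 * rows₀₁ + (-2 * U 0 0) * col₀

theorem stmt_0 (U : Matrix (Fin 2) (Fin 2) ℂ)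
    (hU : U ∈ Matrix.unitaryGroup (Fin 2) ℂ) :
    ‖(U * !![(-1 : ℂ), 0; 0, 1] * Uᴴ * !![(-1 : ℂ), 0; 0, 1] * U) 0 0‖
      = |Real.cos (3 * Real.arccos (‖U 0 0‖))| ∧
    ‖(U * !![(-1 : ℂ), 0; 0, 1] * Uᴴ * !![(-1 : ℂ), 0; 0, 1] * U) 0 0‖
      = |4 * (‖U 0 0‖)^3 - 3 * ‖U 0 0‖| := by
  have hpoly := unitaryGroup_mul_diag_mul_conjTranspose_mul_diag_mul_apply_zero_zero hU ▸
    norm_mul_four_normSq_sub_three (U 0 0)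
  have hcos := Real.cos_three_mul_arccos (by linarith [norm_nonneg (U 0 0)])
    (entry_norm_bound_of_unitary hU 0 0)
  exact ⟨by rw [hpoly, hcos], hpoly⟩
end

section
/- For any 2×2 unitary U, with P = diag(e^{iπ/3}, 1), the matrix A'(U) = U · P · U† · P · U satisfies |⟨1| A'(U) |0⟩| = |⟨1| U |0⟩|³. -/
/-!
Write `P_z = diag(z, 1)` and let `u` be the first column of `U`. Since `P_z = 1 + (z - 1)|0⟩⟨0|`
and `U` is unitary, `U P_z U† = 1 + (z - 1) u u†`, and expanding gives
`⟨1| U P_z U† P_z U |0⟩ = u₁ (z + (z - 1)² |u₀|²)` for every `z`. The sixth root of unity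
`ω = e^{iπ/3}` satisfies `(ω - 1)² = -ω`, so with `|u₀|² + |u₁|² = 1` the entry is `ω u₁ |u₁|²`.
-/

open Matrix Complex Real

lemma Matrix.normSq_zero_add_normSq_one_of_mem_unitaryGroup {U : Matrix (Fin 2) (Fin 2) ℂ}
    (hU : U ∈ unitaryGroup (Fin 2) ℂ) (j : Fin 2) : normSq (U 0 j) + normSq (U 1 j) = 1 := by
  have h := congrFun (congrFun hU.1 j) j
  simp only [star_eq_conjTranspose, mul_apply, Fin.sum_univ_two, conjTranspose_apply,
    star_def, one_apply_eq, ← normSq_eq_conj_mul_self] at h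
  exact_mod_cast h

lemma Matrix.mul_phase_mul_conjTranspose_mul_phase_mul_apply_one_zero
    {U : Matrix (Fin 2) (Fin 2) ℂ} (hU : U ∈ unitaryGroup (Fin 2) ℂ) (z : ℂ) :
    (U * !![z, 0; 0, 1] * Uᴴ * !![z, 0; 0, 1] * U) 1 0
      = U 1 0 * (z + (z - 1) ^ 2 * normSq (U 0 0)) := by
  have hcol := congrFun (congrFun hU.1 0) 0
  have hrow₁₀ := congrFun (congrFun hU.2 1) 0
  have hrow₁₁ := congrFun (congrFun hU.2 1) 1
  simp only [star_eq_conjTranspose, mul_apply, Fin.sum_univ_two, conjTranspose_apply,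
    star_def, one_apply, of_apply, cons_val', cons_val_zero, cons_val_one, empty_val',
    cons_val_fin_one, normSq_eq_conj_mul_self] at hcol hrow₁₀ hrow₁₁ ⊢
  norm_num at hcol hrow₁₀ hrow₁₁ ⊢
  linear_combination z * U 0 0 * hrow₁₀ + U 1 0 * hrow₁₁ + (z - 1) * U 1 0 * hcol

lemma Complex.exp_pi_mul_I_div_three_sq : cexp (π * I / 3) ^ 2 = cexp (π * I / 3) - 1 := by
  have h : cexp (π * I / 3) = 1 / 2 + (√3 / 2 : ℝ) * I := by
    rw [show (π : ℂ) * I / 3 = (π / 3 : ℝ) * I by push_cast; ring, exp_mul_I,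
      ← ofReal_cos, ← ofReal_sin, Real.cos_pi_div_three, Real.sin_pi_div_three]
    push_cast; ring
  have hsqrt : ((√3 : ℝ) : ℂ) ^ 2 = 3 := by norm_cast; simp
  rw [h]
  push_cast
  linear_combination (I ^ 2 / 4) * hsqrt + (3 / 4 : ℂ) * I_sq

theorem stmt_1 (U : Matrix (Fin 2) (Fin 2) ℂ)
    (hU : U ∈ Matrix.unitaryGroup (Fin 2) ℂ) :
    ‖(U * !![Complex.exp (Real.pi * Complex.I / 3), 0; 0, 1] * Uᴴ *
        !![Complex.exp (Real.pi * Complex.I / 3), 0; 0, 1] * U) 1 0‖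
      = (‖U 1 0‖)^3 := by
  set ω := cexp (π * I / 3)
  have hω : ‖ω‖ = 1 := by simp [ω, norm_exp, div_eq_mul_inv]
  have hcol : (normSq (U 0 0) : ℂ) + normSq (U 1 0) = 1 := by
    exact_mod_cast normSq_zero_add_normSq_one_of_mem_unitaryGroup hU 0
  have hfactor : ω + (ω - 1) ^ 2 * normSq (U 0 0) = ω * normSq (U 1 0) := by
    linear_combination (normSq (U 0 0) : ℂ) * exp_pi_mul_I_div_three_sq - ω * hcol
  rw [mul_phase_mul_conjTranspose_mul_phase_mul_apply_one_zero hU, hfactor, norm_mul, norm_mul,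
    hω, norm_real, Real.norm_of_nonneg (normSq_nonneg _), normSq_eq_norm_sq]
  ring
end

section
/- Let ω = e^{iπ/5} and let U be any 2×2 unitary. Then |⟨1| U·diag(1,ω)·U†·diag(1,−ω^{−2})·U·diag(1,−ω^{−2})·U†·diag(1,ω)·U |0⟩| = |⟨1| U |0⟩|⁵. -/
/-!
Write `D(θ) = diag(1, θ)`, `θ = ω` and `φ = ω³ = -ω⁻²`. For unitary `U` the gates `U D(θ) Uᴴ`
and `Uᴴ D(θ) U` are `1 + (θ - 1) P` for rank-one projections `P`, so the amplitude `⟨1| … |0⟩` is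
`c · p(t)` with `c = ⟨1|U|0⟩`, `t = |c|²` and `p` a quadratic polynomial. At a primitive tenth
root of unity `ω` this polynomial reduces, modulo `ω⁴ - ω³ + ω² - ω + 1`, to `ω⁴ t²`; hence the
amplitude is `ω⁴ c |c|⁴`.
-/

open Matrix Complex

namespace IsPrimitiveRoot

variable {R : Type*} [CommRing R] [IsDomain R] {ζ : R}

theorem pow_five_eq_neg_one (hζ : IsPrimitiveRoot ζ 10) : ζ ^ 5 = -1 :=
  (hζ.pow_of_dvd (by norm_num) (by norm_num) : IsPrimitiveRoot (ζ ^ 5) 2).eq_neg_one_of_two_right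

theorem cyclotomic_ten_eval_eq_zero (hζ : IsPrimitiveRoot ζ 10) :
    ζ ^ 4 - ζ ^ 3 + ζ ^ 2 - ζ + 1 = 0 := by
  have hne : ζ + 1 ≠ 0 := fun h => hζ.pow_ne_one_of_pos_of_lt two_ne_zero (by norm_num)
    (by rw [eq_neg_of_add_eq_zero_left h]; norm_num)
  refine (mul_eq_zero.mp ?_).resolve_left hne
  linear_combination hζ.pow_five_eq_neg_one

end IsPrimitiveRoot

theorem neg_inv_sq_eq_pow_three_of_pow_five_eq_neg_one {K : Type*} [Field K] {ζ : K}
    (h : ζ ^ 5 = -1) : -(ζ⁻¹) ^ 2 = ζ ^ 3 := by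
  have hζ : ζ ≠ 0 := by rintro rfl; norm_num at h
  field_simp
  linear_combination -h

theorem isPrimitiveRoot_exp_pi_mul_I_div_five :
    IsPrimitiveRoot (exp (Real.pi * I / 5)) 10 := by
  convert Complex.isPrimitiveRoot_exp 10 (by norm_num) using 2
  push_cast
  ring

section PhaseSandwich

variable {R : Type*} [CommRing R]

-- `t` stands for `|⟨1|U|0⟩|²`; the four summands are the four basis-state paths through the two
-- middle `D(φ)` gates.
def phaseSandwichPoly (θ φ t : R) : R :=
  -(θ - 1) * (1 - t) * (1 + (θ - 1) * t) + φ * (θ - 1) ^ 2 * t * (1 - t)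
    + φ * (1 + (θ - 1) * (1 - t)) * (1 + (θ - 1) * t)
    + φ ^ 2 * (θ - 1) * (1 - t) * (1 + (θ - 1) * (1 - t))

theorem phaseSandwichPoly_eq_of_cyclotomic_ten {ω : R} (hω : ω ^ 4 - ω ^ 3 + ω ^ 2 - ω + 1 = 0)
    (t : R) : phaseSandwichPoly ω (ω ^ 3) t = ω ^ 4 * t ^ 2 := by
  unfold phaseSandwichPoly
  linear_combination ((1 - ω ^ 2 + ω ^ 4) * (1 - t) ^ 2 + (ω + ω ^ 3) * t * (1 - t)) * hω

variable [StarRing R]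

theorem mul_phase_mul_conjTranspose (U : Matrix (Fin 2) (Fin 2) R) (θ : R) :
    U * !![1, 0; 0, θ] * Uᴴ = U * Uᴴ + (θ - 1) • vecMulVec (U.col 1) (star (U.col 1)) := by
  ext i j
  simp [mul_apply, Fin.sum_univ_two, vecMulVec_apply]
  ring

theorem phaseSandwich_apply_one_zero {U : Matrix (Fin 2) (Fin 2) R}
    (hU : U ∈ unitaryGroup (Fin 2) R) (θ φ : R) :
    (U * !![1, 0; 0, θ] * Uᴴ * !![1, 0; 0, φ] * U * !![1, 0; 0, φ] * Uᴴ * !![1, 0; 0, θ] * U) 1 0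
      = U 1 0 * phaseSandwichPoly θ φ (star (U 1 0) * U 1 0) := by
  have hUUh : U * Uᴴ = 1 := mem_unitaryGroup_iff.mp hU
  have hUhU : Uᴴ * U = 1 := mem_unitaryGroup_iff'.mp hU
  have hX := mul_phase_mul_conjTranspose U θ
  have hY := mul_phase_mul_conjTranspose Uᴴ θ
  rw [hUUh] at hX
  rw [conjTranspose_conjTranspose, hUhU] at hY
  have hassoc :
      U * !![1, 0; 0, θ] * Uᴴ * !![1, 0; 0, φ] * U * !![1, 0; 0, φ] * Uᴴ * !![1, 0; 0, θ] * U
        = (U * !![1, 0; 0, θ] * Uᴴ) * !![1, 0; 0, φ] * U * !![1, 0; 0, φ]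
          * (Uᴴ * !![1, 0; 0, θ] * U) := by
    simp only [Matrix.mul_assoc]
  have hdd : U 1 1 * star (U 1 1) = 1 - star (U 1 0) * U 1 0 := by
    have h := congrFun (congrFun hUUh 1) 1
    simp only [mul_apply, conjTranspose_apply, Fin.sum_univ_two, one_apply_eq] at h
    linear_combination h
  have hbb : star (U 0 1) * U 0 1 = star (U 1 0) * U 1 0 := by
    have h := congrFun (congrFun hUhU 1) 1
    simp only [mul_apply, conjTranspose_apply, Fin.sum_univ_two, one_apply_eq] at h
    linear_combination h - hdd
  have hba : star (U 0 1) * U 0 0 = -(star (U 1 1) * U 1 0) := by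
    have h := congrFun (congrFun hUhU 1) 0
    simp only [mul_apply, conjTranspose_apply, Fin.sum_univ_two, ne_eq, one_ne_zero,
      not_false_eq_true, one_apply_ne] at h
    linear_combination h
  rw [hassoc, hX, hY]
  simp only [mul_apply, Matrix.add_apply, Matrix.smul_apply, vecMulVec_apply, col_apply,
    Pi.star_apply, smul_eq_mul, of_apply, cons_val', cons_val_fin_one, Fin.sum_univ_two, ne_eq,
    one_ne_zero, not_false_eq_true, one_apply_ne, zero_add, cons_val_zero, one_apply_eq,
    cons_val_one, mul_one, mul_zero, add_zero, conjTranspose_apply, star_star, phaseSandwichPoly,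
    neg_sub]
  generalize star (U 1 0) * U 1 0 = t at hdd hbb ⊢
  -- with `|d|² = 1 - t`, `|b|² = t` and `b̄ a = -d̄ c`, each path weight becomes `c` times a
  -- polynomial in `t`
  linear_combination ((θ - 1) * U 1 1 * (1 + (θ - 1) * t)) * hba
    + ((θ - 1) ^ 2 * φ * U 1 0 * U 1 1 * star (U 1 1)) * hbb
    + ((θ - 1) * U 1 0 * ((φ - 1) * (1 + (θ - 1) * t) + (θ - 1) * φ * t
      + φ ^ 2 * (1 + (θ - 1) * (1 - t) + (θ - 1) * (U 1 1 * star (U 1 1))))) * hdd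

end PhaseSandwich

theorem stmt_2 (U : Matrix (Fin 2) (Fin 2) ℂ)
    (hU : U ∈ Matrix.unitaryGroup (Fin 2) ℂ) :
    let ω : ℂ := Complex.exp (Real.pi * Complex.I / 5)
    ‖(U * !![(1 : ℂ), 0; 0, ω] * Uᴴ * !![(1 : ℂ), 0; 0, -(ω⁻¹)^2] * U *
        !![(1 : ℂ), 0; 0, -(ω⁻¹)^2] * Uᴴ * !![(1 : ℂ), 0; 0, ω] * U) 1 0‖
      = ‖U 1 0‖^5 := by
  intro ω
  have hω : IsPrimitiveRoot ω 10 := isPrimitiveRoot_exp_pi_mul_I_div_five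
  rw [neg_inv_sq_eq_pow_three_of_pow_five_eq_neg_one hω.pow_five_eq_neg_one,
    phaseSandwich_apply_one_zero hU, phaseSandwichPoly_eq_of_cyclotomic_ten
      hω.cyclotomic_ten_eval_eq_zero, star_def, conj_mul']
  simp only [Complex.norm_mul, norm_pow, hω.norm'_eq_one (by norm_num), one_pow, norm_real,
    norm_norm, one_mul]
  ring
end

section
/- Let ω = e^{iπ/5} and let U be any 2×2 unitary. Then |⟨0| U·diag(1,ω^{−1})·U†·diag(1,−ω^{−2})·U·diag(1,−ω^{2})·U†·diag(1,ω)·U |0⟩| = |⟨0| U |0⟩|⁵. -/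
/-!
Write `D z = diag(1, z)` and let `V` be a left inverse of `U`. Then `U * D z * V = 1 + (z - 1) P`
with `P` the rank-one projection onto the second column of `U` along its first column, so
following `U e₀` through the sandwich `U D₁ V D₂ U D₃ V D₄ U` shows that its `(0, 0)` entry is
`U₀₀ (1 + B t + C t²)` with `t = U₀₁ V₁₀` and `B`, `C` polynomials in the phases. For the phases
built from a primitive tenth root of unity `ω` one gets `B = -2` and `C = 1`, so the entry is
`U₀₀ (1 - t)² = U₀₀ (U₀₀ V₀₀)²`. For unitary `U` and `V = Uᴴ` this is `U₀₀ |U₀₀|⁴`.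
-/

open Matrix Complex

theorem IsPrimitiveRoot.cyclotomic_ten_eval_eq_zero_s3 {R : Type*} [CommRing R] [IsDomain R] {ω : R}
    (hω : IsPrimitiveRoot ω 10) : ω ^ 4 - ω ^ 3 + ω ^ 2 - ω + 1 = 0 := by
  have h5 : ω ^ 5 = -1 :=
    (hω.pow_of_dvd (by norm_num) (by norm_num : 5 ∣ 10)).eq_neg_one_of_two_right
  have hne : ω + 1 ≠ 0 := by
    intro h
    have h2 : ω ^ 2 = 1 := by rw [eq_neg_of_add_eq_zero_left h]; norm_num
    exact absurd ((hω.pow_eq_one_iff_dvd 2).mp h2) (by norm_num)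
  refine (mul_eq_zero.mp ?_).resolve_left hne
  linear_combination h5

section Sandwich

variable {R : Type*} [CommRing R] (U V : Matrix (Fin 2) (Fin 2) R) (z₁ z₂ z₃ z₄ : R)

theorem phase_sandwich_apply_zero_zero (hVU : V * U = 1) :
    (U * !![1, 0; 0, z₁] * V * !![1, 0; 0, z₂] * U * !![1, 0; 0, z₃] * V *
        !![1, 0; 0, z₄] * U) 0 0 =
      U 0 0 * (1 + ((z₃ - 1) * (1 - z₄) + (z₁ - 1) * (1 - z₂ * z₄) +
          (z₁ - 1) * z₂ * (z₃ - 1) * (1 - z₄)) * (U 0 1 * V 1 0) +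
        (z₁ - 1) * (1 - z₂) * (z₃ - 1) * (1 - z₄) * (U 0 1 * V 1 0) ^ 2) := by
  have h00 := congrFun (congrFun hVU 0) 0
  have h01 := congrFun (congrFun hVU 0) 1
  have h10 := congrFun (congrFun hVU 1) 0
  have h11 := congrFun (congrFun hVU 1) 1
  simp only [mul_apply, Fin.sum_univ_two, one_apply_eq, ne_eq, zero_ne_one, one_ne_zero,
    not_false_eq_true, one_apply_ne, of_apply, cons_val', cons_val_fin_one, cons_val_zero,
    cons_val_one, mul_one, mul_zero, add_zero, zero_add] at h00 h01 h10 h11 ⊢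
  grind

theorem phase_sandwich_apply_zero_zero_of_coeffs (hVU : V * U = 1)
    (hB : (z₃ - 1) * (1 - z₄) + (z₁ - 1) * (1 - z₂ * z₄) + (z₁ - 1) * z₂ * (z₃ - 1) * (1 - z₄)
      = -2)
    (hC : (z₁ - 1) * (1 - z₂) * (z₃ - 1) * (1 - z₄) = 1) :
    (U * !![1, 0; 0, z₁] * V * !![1, 0; 0, z₂] * U * !![1, 0; 0, z₃] * V *
        !![1, 0; 0, z₄] * U) 0 0 = U 0 0 * (U 0 0 * V 0 0) ^ 2 := by
  have hrow : U 0 0 * V 0 0 + U 0 1 * V 1 0 = 1 := by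
    have hUV : U * V = 1 := mul_eq_one_comm.mp hVU
    simpa [mul_apply, Fin.sum_univ_two] using congrFun (congrFun hUV 0) 0
  rw [phase_sandwich_apply_zero_zero U V z₁ z₂ z₃ z₄ hVU, hB, hC]
  linear_combination (-(U 0 0) * (U 0 0 * V 0 0 + 1 - U 0 1 * V 1 0)) * hrow

end Sandwich

theorem phase_coeffs_eq_of_cyclotomic_ten {K : Type*} [Field K] {ω : K}
    (h : ω ^ 4 - ω ^ 3 + ω ^ 2 - ω + 1 = 0) :
    (-ω ^ 2 - 1) * (1 - ω) + (ω⁻¹ - 1) * (1 - -(ω⁻¹) ^ 2 * ω) +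
        (ω⁻¹ - 1) * -(ω⁻¹) ^ 2 * (-ω ^ 2 - 1) * (1 - ω) = -2 ∧
      (ω⁻¹ - 1) * (1 - -(ω⁻¹) ^ 2) * (-ω ^ 2 - 1) * (1 - ω) = 1 := by
  have h5 : ω ^ 5 = -1 := by linear_combination (ω + 1) * h
  have hinv : ω⁻¹ = -ω ^ 4 := inv_eq_of_mul_eq_one_right (by linear_combination -h5)
  rw [hinv]
  constructor <;> grind

theorem stmt_3 (U : Matrix (Fin 2) (Fin 2) ℂ)
    (hU : U ∈ Matrix.unitaryGroup (Fin 2) ℂ) :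
    let ω : ℂ := Complex.exp (Real.pi * Complex.I / 5)
    ‖(U * !![(1 : ℂ), 0; 0, ω⁻¹] * Uᴴ * !![(1 : ℂ), 0; 0, -(ω⁻¹)^2] * U *
        !![(1 : ℂ), 0; 0, -ω^2] * Uᴴ * !![(1 : ℂ), 0; 0, ω] * U) 0 0‖
      = ‖U 0 0‖^5 := by
  intro ω
  obtain ⟨hB, hC⟩ := phase_coeffs_eq_of_cyclotomic_ten
    isPrimitiveRoot_exp_pi_mul_I_div_five.cyclotomic_ten_eval_eq_zero_s3
  rw [phase_sandwich_apply_zero_zero_of_coeffs U Uᴴ _ _ _ _ (mem_unitaryGroup_iff'.mp hU) hB hC,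
    conjTranspose_apply]
  simp only [norm_mul, norm_pow, norm_star]
  ring
end

section
/- Let τ = (1+√5)/2, ω = e^{iπ/5}, R = diag(e^{−4πi/5}, e^{3πi/5}), F = [[1/τ, 1/√τ],[1/√τ, −1/τ]], and S = FRF. Define M₀ = S and inductively M_j = M_{j−1}·R^{−1}·M_{j−1}†·R³·M_{j−1}·R^{−3}·M_{j−1}†·R·M_{j−1}. Then for all j ≥ 0, |⟨0| M_j |0⟩| = (1/τ)^{5^j}. -/
/-!
Write `ω = e^{iπ/5}`, a primitive 10th root of unity. Up to scalar phases, the gates are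
`R⁻¹ ~ P(ω³)`, `R³ ~ P(ω)`, `R⁻³ ~ P(ω⁹)`, `R ~ P(ω⁷)` with `P(z) = diag(1, z)`; scalar phases
do not change `|⟨0|M|0⟩|`. For unitary `M = [[a, b], [c, d]]`, `M P(z) M† = 1 + (z - 1) v v†`
where `v = (b, d)` is the second column of `M`. Expanding the braid word and using the
orthonormality of the columns gives `⟨0|M_{j+1}|0⟩ = a · f(|b|²)`, where `f` is a quadratic
polynomial with coefficients in `ℤ[ω]`. Modulo `Φ₁₀(ω) = ω⁴ - ω³ + ω² - ω + 1 = 0`, `f(y)` reduces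
to `(1 - y)² = |a|⁴`. Hence `|⟨0|M_{j+1}|0⟩| = |⟨0|M_j|0⟩|⁵`. In the base case,
`⟨0|FRF|0⟩ = ω⁶ φ⁻² (1 + φ ω⁷)`, and `|1 + φ ω⁷| = φ` because `φ = ω + ω⁻¹ = 2 cos(π/5)`.
-/

open Matrix Complex

noncomputable def fibR : Matrix (Fin 2) (Fin 2) ℂ :=
  !![Complex.exp (-4 * Real.pi * Complex.I / 5), 0; 0, Complex.exp (3 * Real.pi * Complex.I / 5)]

noncomputable def fibF : Matrix (Fin 2) (Fin 2) ℂ :=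
  !![(1 / ((1 + Real.sqrt 5) / 2) : ℝ), (1 / Real.sqrt ((1 + Real.sqrt 5) / 2) : ℝ);
     (1 / Real.sqrt ((1 + Real.sqrt 5) / 2) : ℝ), -(1 / ((1 + Real.sqrt 5) / 2) : ℝ)]

open ComplexConjugate

def phaseGate (z : ℂ) : Matrix (Fin 2) (Fin 2) ℂ := !![1, 0; 0, z]

lemma phaseGate_mul (z w : ℂ) : phaseGate z * phaseGate w = phaseGate (z * w) := by
  ext i j; fin_cases i <;> fin_cases j <;> simp [phaseGate, mul_apply, Fin.sum_univ_two]

lemma phaseGate_one : phaseGate 1 = 1 := by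
  ext i j; fin_cases i <;> fin_cases j <;> simp [phaseGate]

lemma phaseGate_pow (z : ℂ) (n : ℕ) : phaseGate z ^ n = phaseGate (z ^ n) := by
  induction n with
  | zero => rw [pow_zero, pow_zero, phaseGate_one]
  | succ n ih => rw [pow_succ, ih, phaseGate_mul, pow_succ]

lemma phaseGate_mem_unitary {z : ℂ} (hz : z ∈ unitary ℂ) :
    phaseGate z ∈ unitary (Matrix (Fin 2) (Fin 2) ℂ) := by
  have h : conj z * z = 1 := Unitary.star_mul_self_of_mem hz
  rw [← Matrix.unitaryGroup, mem_unitaryGroup_iff']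
  ext i j; fin_cases i <;> fin_cases j <;> simp [phaseGate, mul_apply, Fin.sum_univ_two, h]

lemma mul_phaseGate_mul_conjTranspose {M : Matrix (Fin 2) (Fin 2) ℂ}
    (hM : M ∈ unitary (Matrix (Fin 2) (Fin 2) ℂ)) (z : ℂ) :
    M * phaseGate z * Mᴴ = 1 + (z - 1) • vecMulVec (fun i => M i 1) (star fun i => M i 1) := by
  have hrows : M * Mᴴ = 1 := Unitary.mul_star_self_of_mem hM
  ext i j
  have hij := Matrix.ext_iff.2 hrows i j
  fin_cases i <;> fin_cases j <;>
    simp [phaseGate, mul_apply, Fin.sum_univ_two, vecMulVec_apply] at hij ⊢ <;>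
    linear_combination hij

lemma braid_phase_identity {ω : ℂ} (hω : ω ^ 4 - ω ^ 3 + ω ^ 2 - ω + 1 = 0) (y : ℂ) :
    (1 + (ω ^ 3 - 1) * y) * (1 + (1 - ω ^ 7) * (ω ^ 9 - 1) * y)
      + ω * (ω ^ 3 - 1) * (ω ^ 9 - 1) * y * (1 - y)
      - ω ^ 8 * (ω ^ 3 - 1) * y * (1 + (ω ^ 9 - 1) * (1 - y)) = (1 - y) ^ 2 := by
  linear_combination
    (y * (ω + ω ^ 2 + ω ^ 3 - ω ^ 5 - ω ^ 6 + ω ^ 9 + ω ^ 10 + ω ^ 13 - ω ^ 15 - ω ^ 16)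
      + y ^ 2 * (-ω - ω ^ 2 - ω ^ 3 + ω ^ 5 + ω ^ 6 + ω ^ 8 - ω ^ 13 - ω ^ 14 + ω ^ 16)) * hω

lemma braidWord_apply_zero_zero {M : Matrix (Fin 2) (Fin 2) ℂ}
    (hM : M ∈ unitary (Matrix (Fin 2) (Fin 2) ℂ)) {ω : ℂ}
    (hω : ω ^ 4 - ω ^ 3 + ω ^ 2 - ω + 1 = 0) :
    (M * phaseGate (ω ^ 3) * Mᴴ * phaseGate ω * M * phaseGate (ω ^ 9) * Mᴴ *
      phaseGate (ω ^ 7) * M) 0 0 = M 0 0 ^ 3 * conj (M 0 0) ^ 2 := by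
  have hcols : Mᴴ * M = 1 := Unitary.star_mul_self_of_mem hM
  have hrow₀ := Matrix.ext_iff.2 (Unitary.mul_star_self_of_mem hM) 0 0
  have horth := Matrix.ext_iff.2 hcols 1 0
  have hcol₁ := Matrix.ext_iff.2 hcols 1 1
  simp only [star_eq_conjTranspose, mul_apply, conjTranspose_apply, Fin.sum_univ_two,
    RCLike.star_def, one_apply_eq, one_apply_ne (by decide : (1 : Fin 2) ≠ 0)]
    at hrow₀ horth hcol₁
  rw [show M * phaseGate (ω ^ 3) * Mᴴ * phaseGate ω * M * phaseGate (ω ^ 9) * Mᴴ *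
      phaseGate (ω ^ 7) * M = (M * phaseGate (ω ^ 3) * Mᴴ) * phaseGate ω *
      (M * phaseGate (ω ^ 9) * Mᴴ) * phaseGate (ω ^ 7) * M by simp only [Matrix.mul_assoc],
    mul_phaseGate_mul_conjTranspose hM, mul_phaseGate_mul_conjTranspose hM]
  simp only [phaseGate, mul_apply, Fin.sum_univ_two, RCLike.star_def, Matrix.add_apply,
    Matrix.smul_apply, smul_eq_mul, vecMulVec_apply, Pi.star_apply, of_apply, cons_val',
    cons_val_zero, cons_val_one, cons_val_fin_one, one_apply_eq, one_apply_ne, ne_eq, zero_ne_one,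
    one_ne_zero, not_false_eq_true, mul_one, mul_zero, add_zero, zero_add]
  set a := M 0 0
  set b := M 0 1
  set d := M 1 1
  set y := b * conj b
  -- `horth` turns `conj d * c` into `-(conj b * a)` and `hcol₁` turns `d * conj d` into `1 - y`,
  -- which leaves `a` times the polynomial of `braid_phase_identity`.
  linear_combination
    ((1 + (ω ^ 3 - 1) * y) * (ω ^ 9 - 1) * b * ω ^ 7
      + (ω ^ 3 - 1) * ω * ω ^ 7 * b * (1 + (ω ^ 9 - 1) * (d * conj d))) * horth
    + ((ω ^ 3 - 1) * ω * (ω ^ 9 - 1) * y * a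
      - (ω ^ 3 - 1) * ω * ω ^ 7 * b * (ω ^ 9 - 1) * conj b * a) * hcol₁
    + a * braid_phase_identity hω y - a * (a * conj a + 1 - y) * hrow₀

lemma IsPrimitiveRoot.cyclotomic_ten_eq_zero {R : Type*} [CommRing R] [IsDomain R] {ζ : R}
    (hζ : IsPrimitiveRoot ζ 10) : ζ ^ 4 - ζ ^ 3 + ζ ^ 2 - ζ + 1 = 0 := by
  have h5 : ζ ^ 5 = -1 := (hζ.pow (by norm_num) (by norm_num : 10 = 5 * 2)).eq_neg_one_of_two_right
  have hne : ζ + 1 ≠ 0 := by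
    intro h
    rw [add_eq_zero_iff_eq_neg.mp h] at hζ
    exact hζ.pow_ne_one_of_pos_of_lt (by norm_num : 2 ≠ 0) (by norm_num) (by norm_num)
  refine (mul_eq_zero.mp ?_).resolve_left hne
  linear_combination h5

open Real goldenRatio

noncomputable def fibOmega : ℂ := Complex.exp (π * I / 5)

local notation "ω" => fibOmega

lemma fibOmega_isPrimitiveRoot : IsPrimitiveRoot ω 10 := by
  convert Complex.isPrimitiveRoot_exp 10 (by norm_num) using 1
  rw [fibOmega]
  congr 1
  push_cast
  ring

lemma fibOmega_pow_ten : ω ^ 10 = 1 := fibOmega_isPrimitiveRoot.pow_eq_one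

lemma fibOmega_pow_mod (n : ℕ) : ω ^ n = ω ^ (n % 10) := pow_eq_pow_mod n fibOmega_pow_ten

lemma norm_fibOmega : ‖ω‖ = 1 := fibOmega_isPrimitiveRoot.norm'_eq_one (by norm_num)

lemma conj_fibOmega : conj ω = ω ^ 9 := by
  rw [← inv_eq_conj norm_fibOmega, eq_comm,
    ← mul_eq_one_iff_eq_inv₀ (fibOmega_isPrimitiveRoot.ne_zero (by norm_num)), ← pow_succ,
    fibOmega_pow_ten]

lemma fibOmega_mem_unitary : ω ∈ unitary ℂ := by
  rw [Unitary.mem_iff, mul_comm, and_self, RCLike.star_def, conj_fibOmega, ← pow_succ',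
    fibOmega_pow_ten]

lemma fibOmega_add_pow_nine : ω + ω ^ 9 = φ := by
  rw [← conj_fibOmega, add_conj, fibOmega,
    show (π * I / 5 : ℂ) = (π / 5 : ℝ) * I by push_cast; ring, exp_ofReal_mul_I_re,
    cos_pi_div_five]
  push_cast
  ring

lemma norm_one_add_goldenRatio_mul_fibOmega_pow_seven : ‖1 + φ * ω ^ 7‖ = φ := by
  have hsq : ((‖1 + φ * ω ^ 7‖ ^ 2 : ℝ) : ℂ) = (φ ^ 2 : ℝ) := by
    have hconj : conj (ω ^ 7) = ω ^ 3 := by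
      rw [map_pow, conj_fibOmega, ← pow_mul, fibOmega_pow_mod]
    rw [← normSq_eq_norm_sq, normSq_eq_conj_mul_self, map_add, map_mul, hconj, conj_ofReal,
      map_one, ofReal_pow, ← fibOmega_add_pow_nine]
    linear_combination
      (ω ^ 4 + ω ^ 3 + ω ^ 2 + ω + 1) * fibOmega_isPrimitiveRoot.cyclotomic_ten_eq_zero
        + ((ω + ω ^ 9) ^ 2 + ω ^ 2 + ω ^ 6) * fibOmega_pow_ten
  exact (sq_eq_sq₀ (norm_nonneg _) goldenRatio_pos.le).mp (by exact_mod_cast hsq)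

lemma fibOmega_pow_smul_phaseGate_mem_unitary (k m : ℕ) :
    ω ^ k • phaseGate (ω ^ m) ∈ unitary (Matrix (Fin 2) (Fin 2) ℂ) :=
  Unitary.smul_mem_of_mem (pow_mem fibOmega_mem_unitary k)
    (phaseGate_mem_unitary (pow_mem fibOmega_mem_unitary m))

lemma fibR_eq : fibR = ω ^ 6 • phaseGate (ω ^ 7) := by
  have h₀ : Complex.exp (-4 * π * I / 5) = ω ^ 6 := by
    rw [fibOmega, ← Complex.exp_nat_mul, ← exp_periodic (-4 * π * I / 5)]
    congr 1
    push_cast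
    ring
  have h₁ : Complex.exp (3 * π * I / 5) = ω ^ 6 * ω ^ 7 := by
    rw [← pow_add, fibOmega_pow_mod, fibOmega, ← Complex.exp_nat_mul]
    congr 1
    push_cast
    ring
  rw [fibR, h₀, h₁]
  ext i j; fin_cases i <;> fin_cases j <;> simp [phaseGate]

lemma fibR_inv : fibR⁻¹ = ω ^ 4 • phaseGate (ω ^ 3) := by
  refine inv_eq_right_inv ?_
  rw [fibR_eq, smul_mul_smul_comm, phaseGate_mul, ← pow_add, ← pow_add, fibOmega_pow_ten,
    phaseGate_one, one_smul]

lemma fibR_pow_three : fibR ^ 3 = ω ^ 8 • phaseGate ω := by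
  rw [fibR_eq, smul_pow, phaseGate_pow, ← pow_mul, ← pow_mul, fibOmega_pow_mod (6 * 3),
    fibOmega_pow_mod (7 * 3)]
  norm_num

lemma fibR_inv_pow_three : fibR⁻¹ ^ 3 = ω ^ 2 • phaseGate (ω ^ 9) := by
  rw [fibR_inv, smul_pow, phaseGate_pow, ← pow_mul, ← pow_mul, fibOmega_pow_mod (4 * 3)]

lemma fibR_mem_unitary : fibR ∈ unitary (Matrix (Fin 2) (Fin 2) ℂ) := by
  rw [fibR_eq]
  exact fibOmega_pow_smul_phaseGate_mem_unitary 6 7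

noncomputable def braidStep (M : Matrix (Fin 2) (Fin 2) ℂ) : Matrix (Fin 2) (Fin 2) ℂ :=
  M * fibR⁻¹ * Mᴴ * fibR ^ 3 * M * fibR⁻¹ ^ 3 * Mᴴ * fibR * M

lemma braidStep_mem_unitary {M : Matrix (Fin 2) (Fin 2) ℂ}
    (hM : M ∈ unitary (Matrix (Fin 2) (Fin 2) ℂ)) :
    braidStep M ∈ unitary (Matrix (Fin 2) (Fin 2) ℂ) := by
  have hMH : Mᴴ ∈ unitary (Matrix (Fin 2) (Fin 2) ℂ) := Unitary.star_mem hM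
  have hR := fibR_mem_unitary
  have hR' : fibR⁻¹ ∈ unitary (Matrix (Fin 2) (Fin 2) ℂ) := by
    rw [fibR_inv]
    exact fibOmega_pow_smul_phaseGate_mem_unitary 4 3
  exact mul_mem (mul_mem (mul_mem (mul_mem (mul_mem (mul_mem (mul_mem (mul_mem hM hR') hMH)
    (pow_mem hR 3)) hM) (pow_mem hR' 3)) hMH) hR) hM

lemma norm_braidStep_apply_zero_zero {M : Matrix (Fin 2) (Fin 2) ℂ}
    (hM : M ∈ unitary (Matrix (Fin 2) (Fin 2) ℂ)) :
    ‖braidStep M 0 0‖ = ‖M 0 0‖ ^ 5 := by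
  rw [braidStep, fibR_inv_pow_three, fibR_pow_three, fibR_inv, fibR_eq]
  simp only [Matrix.mul_smul, Matrix.smul_mul, Matrix.smul_apply, smul_eq_mul, norm_mul,
    norm_pow, norm_fibOmega, one_pow, one_mul]
  rw [braidWord_apply_zero_zero hM fibOmega_isPrimitiveRoot.cyclotomic_ten_eq_zero,
    norm_mul, norm_pow, norm_pow, Complex.norm_conj]
  ring

lemma reflection_mem_unitary {a b : ℝ} (h : a ^ 2 + b ^ 2 = 1) :
    !![(a : ℂ), b; b, -a] ∈ unitary (Matrix (Fin 2) (Fin 2) ℂ) := by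
  have h' : (a : ℂ) ^ 2 + b ^ 2 = 1 := by exact_mod_cast h
  rw [← Matrix.unitaryGroup, mem_unitaryGroup_iff]
  ext i j; fin_cases i <;> fin_cases j <;> simp [mul_apply, Fin.sum_univ_two]
  all_goals first | linear_combination h' | ring

lemma reflection_mul_smul_phaseGate_mul_reflection_apply_zero_zero (a b c z : ℂ) :
    (!![a, b; b, -a] * (c • phaseGate z) * !![a, b; b, -a]) 0 0 = c * (a ^ 2 + b ^ 2 * z) := by
  simp only [phaseGate, mul_apply, Fin.sum_univ_two, Matrix.smul_apply, of_apply, cons_val',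
    cons_val_zero, cons_val_one, cons_val_fin_one, smul_eq_mul]
  ring

lemma fibF_eq : fibF = !![((φ⁻¹ : ℝ) : ℂ), ((√φ)⁻¹ : ℝ); ((√φ)⁻¹ : ℝ), -((φ⁻¹ : ℝ) : ℂ)] := by
  simp only [fibF, one_div]

lemma fibF_mem_unitary : fibF ∈ unitary (Matrix (Fin 2) (Fin 2) ℂ) := by
  rw [fibF_eq]
  refine reflection_mem_unitary ?_
  rw [inv_pow √φ, Real.sq_sqrt goldenRatio_pos.le, inv_goldenRatio]
  linear_combination goldenConj_sq

lemma norm_fibF_mul_fibR_mul_fibF_apply_zero_zero : ‖(fibF * fibR * fibF) 0 0‖ = 1 / φ := by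
  have hφ : (φ : ℂ) ≠ 0 := ofReal_ne_zero.mpr goldenRatio_ne_zero
  have hb : (√φ)⁻¹ ^ 2 = φ⁻¹ := by rw [inv_pow, Real.sq_sqrt goldenRatio_pos.le]
  rw [fibF_eq, fibR_eq, reflection_mul_smul_phaseGate_mul_reflection_apply_zero_zero,
    ← ofReal_pow (√φ)⁻¹, hb, ofReal_inv,
    show (φ : ℂ)⁻¹ ^ 2 + (φ : ℂ)⁻¹ * ω ^ 7 = (φ : ℂ)⁻¹ ^ 2 * (1 + φ * ω ^ 7) by
      linear_combination (-(φ : ℂ)⁻¹ * ω ^ 7) * inv_mul_cancel₀ hφ,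
    norm_mul, norm_mul, norm_one_add_goldenRatio_mul_fibOmega_pow_seven, norm_pow, norm_pow,
    norm_fibOmega, norm_inv, norm_real, Real.norm_of_nonneg goldenRatio_pos.le, one_pow, one_mul]
  field_simp

theorem stmt_6 (M : ℕ → Matrix (Fin 2) (Fin 2) ℂ)
    (h0 : M 0 = fibF * fibR * fibF)
    (hrec : ∀ j : ℕ, M (j + 1) =
      M j * fibR⁻¹ * (M j)ᴴ * fibR^3 * M j * (fibR⁻¹)^3 * (M j)ᴴ * fibR * M j) :
    ∀ j : ℕ, ‖(M j) 0 0‖ = (1 / ((1 + Real.sqrt 5) / 2))^(5^j) := by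
  have hunitary : ∀ j, M j ∈ unitary (Matrix (Fin 2) (Fin 2) ℂ) := by
    intro j
    induction j with
    | zero => rw [h0]; exact mul_mem (mul_mem fibF_mem_unitary fibR_mem_unitary) fibF_mem_unitary
    | succ j ih => rw [hrec]; exact braidStep_mem_unitary ih
  intro j
  induction j with
  | zero => rw [h0, norm_fibF_mul_fibR_mul_fibF_apply_zero_zero, pow_zero, pow_one]
  | succ j ih =>
    rw [hrec, ← braidStep, norm_braidStep_apply_zero_zero (hunitary j), ih, ← pow_mul, pow_succ]
end

section
/- Define a sequence of permutations σ_j ∈ S₄ by σ₀ = (23) and σ_j = σ_{j−1}·(12)·σ_{j−1}^{−1}·(12)·σ_{j−1}·(12)·σ_{j−1}^{−1}·(12)·σ_{j−1}. Then σ_j = (23) for all even j and σ_j = (13) for all odd j. -/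
open Equiv

lemma aux1 : (Equiv.swap 1 2 : Equiv.Perm (Fin 4)) * Equiv.swap 0 1 * (Equiv.swap 1 2)⁻¹ * Equiv.swap 0 1 * Equiv.swap 1 2 * Equiv.swap 0 1 * (Equiv.swap 1 2)⁻¹ * Equiv.swap 0 1 * Equiv.swap 1 2 = Equiv.swap 0 2 := by decide

lemma aux2 : (Equiv.swap 0 2 : Equiv.Perm (Fin 4)) * Equiv.swap 0 1 * (Equiv.swap 0 2)⁻¹ * Equiv.swap 0 1 * Equiv.swap 0 2 * Equiv.swap 0 1 * (Equiv.swap 0 2)⁻¹ * Equiv.swap 0 1 * Equiv.swap 0 2 = Equiv.swap 1 2 := by decide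

theorem stmt_9 (σ : ℕ → Equiv.Perm (Fin 4))
    (h0 : σ 0 = Equiv.swap 1 2)
    (hrec : ∀ j : ℕ, σ (j + 1) =
      σ j * Equiv.swap 0 1 * (σ j)⁻¹ * Equiv.swap 0 1 * σ j * Equiv.swap 0 1 * (σ j)⁻¹ *
        Equiv.swap 0 1 * σ j) :
    ∀ j : ℕ, (Even j → σ j = Equiv.swap 1 2) ∧ (Odd j → σ j = Equiv.swap 0 2) := by
  intro j
  induction j with
  | zero => exact ⟨fun _ => h0, fun h => absurd h (by simp)⟩
  | succ n ih =>
    rcases Nat.even_or_odd n with he | ho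
    · have hn := ih.1 he
      refine ⟨fun h => absurd h (by simp [Nat.even_add_one, he]), fun _ => ?_⟩
      rw [hrec, hn, aux1]
    · have hn := ih.2 ho
      refine ⟨fun _ => ?_, fun h => absurd (Nat.odd_add_one.mp h) (by simpa using ho)⟩
      rw [hrec, hn, aux2]
end

section
/- Let τ = (1+√5)/2, R = diag(e^{−4πi/5}, e^{3πi/5}), F = [[1/τ, 1/√τ],[1/√τ, −1/τ]]. Define N₀ = F and inductively N_j = N_{j−1}·R·N_{j−1}†·R³·N_{j−1}·R³·N_{j−1}†·R·N_{j−1}. Then for all j ≥ 0, |⟨1| N_j |0⟩| = (1/√τ)^{5^j}. -/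
open Matrix Complex

/-
For a unitary `U = !![a, b; c, d]` one has `Uᴴ = star (det U) • adjugate U`, so with
`R = diag(z⁶, z³)`, `z = e^{iπ/5}`, the `(1,0)` entry of `U R Uᴴ R³ U R³ Uᴴ R U` is a polynomial in `z`
and the entries of `U`. Modulo the tenth cyclotomic polynomial `z⁴ - z³ + z² - z + 1` it collapses to
`z⁶ c³ (star c)²`, of modulus `|c|⁵`. Every `N j` is unitary, so the modulus of the lower-left entry
is raised to the fifth power at each step, starting from `|F₁₀| = 1/√τ`.
-/

def braidWord {α : Type*} [Semiring α] (R A B : Matrix (Fin 2) (Fin 2) α) :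
    Matrix (Fin 2) (Fin 2) α :=
  A * R * B * R ^ 3 * A * R ^ 3 * B * R * A

def braidMatrix {α : Type*} [Semiring α] (z : α) : Matrix (Fin 2) (Fin 2) α :=
  !![z ^ 6, 0; 0, z ^ 3]

section CommRing

variable {α : Type*} [CommRing α]

lemma braidWord_smul_adjugate_apply_one_zero {z : α} (hz : z ^ 4 - z ^ 3 + z ^ 2 - z + 1 = 0)
    (e : α) (A : Matrix (Fin 2) (Fin 2) α) :
    braidWord (braidMatrix z) A (e • adjugate A) 1 0 = z ^ 6 * A 1 0 ^ 3 * (e * A 0 1) ^ 2 := by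
  rw [eta_fin_two A, adjugate_fin_two_of, smul_of]
  simp only [braidWord, braidMatrix, pow_three, mul_fin_two, smul_cons, smul_eq_mul, smul_empty,
    of_apply, cons_val', cons_val_zero, cons_val_one, cons_val_fin_one, empty_val']
  grind

variable [StarRing α]

lemma conjTranspose_eq_star_det_smul_adjugate {n : Type*} [Fintype n] [DecidableEq n]
    {U : Matrix n n α} (hU : U ∈ unitaryGroup n α) : Uᴴ = star U.det • adjugate U := by
  have hdet : star U.det * U.det = 1 := Unitary.star_mul_self_of_mem (det_of_mem_unitary hU)
  calc Uᴴ = Uᴴ * (star U.det * U.det) • (1 : Matrix n n α) := by rw [hdet, one_smul, mul_one]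
    _ = star U.det • (Uᴴ * U) * adjugate U := by
      rw [mul_smul, ← mul_adjugate, smul_mul_assoc, mul_smul_comm, Matrix.mul_assoc]
    _ = star U.det • adjugate U := by
      rw [← star_eq_conjTranspose, Unitary.star_mul_self_of_mem hU, smul_mul_assoc, Matrix.one_mul]

lemma braidWord_conjTranspose_apply_one_zero {z : α} (hz : z ^ 4 - z ^ 3 + z ^ 2 - z + 1 = 0)
    {U : Matrix (Fin 2) (Fin 2) α} (hU : U ∈ unitaryGroup (Fin 2) α) :
    braidWord (braidMatrix z) U Uᴴ 1 0 = z ^ 6 * U 1 0 ^ 3 * star (U 1 0) ^ 2 := by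
  have h01 : star (U 1 0) = -(star U.det * U 0 1) := by
    rw [← conjTranspose_apply, conjTranspose_eq_star_det_smul_adjugate hU]
    simp [adjugate_fin_two]
  rw [conjTranspose_eq_star_det_smul_adjugate hU, braidWord_smul_adjugate_apply_one_zero hz, h01,
    neg_sq]

lemma braidWord_mem_unitaryGroup {R A : Matrix (Fin 2) (Fin 2) α} (hR : R ∈ unitaryGroup (Fin 2) α)
    (hA : A ∈ unitaryGroup (Fin 2) α) : braidWord R A Aᴴ ∈ unitaryGroup (Fin 2) α := by
  have hA' : Aᴴ ∈ unitaryGroup (Fin 2) α := Unitary.star_mem hA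
  have hR3 : R ^ 3 ∈ unitaryGroup (Fin 2) α := pow_mem hR 3
  exact mul_mem (mul_mem (mul_mem (mul_mem (mul_mem (mul_mem (mul_mem (mul_mem hA hR) hA') hR3) hA)
    hR3) hA') hR) hA

lemma braidMatrix_mem_unitaryGroup {z : α} (hz : z ∈ unitary α) :
    braidMatrix z ∈ unitaryGroup (Fin 2) α := by
  rw [mem_unitaryGroup_iff']
  ext i j
  fin_cases i <;> fin_cases j <;>
    simp [braidMatrix, mul_apply, ← mul_pow, Unitary.star_mul_self_of_mem hz]

end CommRing

lemma cyclotomic_ten_eq_zero_of_pow_five_eq_neg_one {R : Type*} [CommRing R] [IsDomain R] {z : R}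
    (h5 : z ^ 5 = -1) (h1 : z ≠ -1) : z ^ 4 - z ^ 3 + z ^ 2 - z + 1 = 0 := by
  have hfactor : (z + 1) * (z ^ 4 - z ^ 3 + z ^ 2 - z + 1) = 0 := by linear_combination h5
  exact (mul_eq_zero.mp hfactor).resolve_left fun h ↦ h1 (eq_neg_of_add_eq_zero_left h)

lemma norm_braidWord_conjTranspose_apply_one_zero {𝕜 : Type*} [RCLike 𝕜] {z : 𝕜}
    (hz : z ^ 4 - z ^ 3 + z ^ 2 - z + 1 = 0) (hzu : z ∈ unitary 𝕜)
    {U : Matrix (Fin 2) (Fin 2) 𝕜} (hU : U ∈ unitaryGroup (Fin 2) 𝕜) :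
    ‖braidWord (braidMatrix z) U Uᴴ 1 0‖ = ‖U 1 0‖ ^ 5 := by
  rw [braidWord_conjTranspose_apply_one_zero hz hU]
  simp only [norm_mul, norm_pow, norm_star, CStarRing.norm_of_mem_unitary hzu]
  ring

lemma reflection_mem_unitaryGroup {𝕜 : Type*} [RCLike 𝕜] {a b : ℝ} (h : a ^ 2 + b ^ 2 = 1) :
    !![(a : 𝕜), b; b, -a] ∈ unitaryGroup (Fin 2) 𝕜 := by
  rw [mem_unitaryGroup_iff']
  have h' : (a : 𝕜) * a + b * b = 1 := by exact_mod_cast (by linear_combination h)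
  ext i j
  fin_cases i <;> fin_cases j <;> simp [mul_apply] <;> first | linear_combination h' | ring

open scoped Real goldenRatio

lemma exp_pi_div_five_pow_five : exp (π * I / 5) ^ 5 = -1 := by
  rw [← exp_nat_mul, show ((5 : ℕ) : ℂ) * (π * I / 5) = π * I by push_cast; ring, exp_pi_mul_I]

lemma exp_pi_div_five_ne_neg_one : exp (π * I / 5) ≠ -1 := by
  have h := isPrimitiveRoot_exp 10 (by norm_num)
  rw [show 2 * π * I / (10 : ℕ) = π * I / 5 by push_cast; ring] at h
  intro h'
  exact h.pow_ne_one_of_pos_of_lt (by norm_num : 2 ≠ 0) (by norm_num) (by rw [h']; norm_num)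

lemma exp_pi_div_five_mem_unitary : exp (π * I / 5) ∈ unitary ℂ := by
  have h : ‖exp (π * I / 5)‖ = 1 := by rw [norm_exp]; simp
  exact ⟨by simp [conj_mul', h], by simp [mul_conj', h]⟩

lemma fibR_eq_braidMatrix : fibR = braidMatrix (exp (π * I / 5)) := by
  have h6 : exp (π * I / 5) ^ 6 = exp (-4 * π * I / 5) := by
    rw [← exp_nat_mul, show ((6 : ℕ) : ℂ) * (π * I / 5) = -4 * π * I / 5 + 2 * π * I by
      push_cast; ring, exp_add, exp_two_pi_mul_I, mul_one]
  have h3 : exp (π * I / 5) ^ 3 = exp (3 * π * I / 5) := by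
    rw [← exp_nat_mul]; congr 1; push_cast; ring
  rw [fibR, braidMatrix, h6, h3]

lemma fibR_mem_unitaryGroup : fibR ∈ unitaryGroup (Fin 2) ℂ :=
  fibR_eq_braidMatrix ▸ braidMatrix_mem_unitaryGroup exp_pi_div_five_mem_unitary

lemma fibF_mem_unitaryGroup : fibF ∈ unitaryGroup (Fin 2) ℂ := by
  have hφ : (1 / φ) ^ 2 + (1 / √φ) ^ 2 = 1 := by
    rw [_root_.one_div_pow, _root_.one_div_pow, Real.sq_sqrt Real.goldenRatio_pos.le, one_div,
      one_div, ← inv_pow, Real.inv_goldenRatio]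
    linear_combination Real.goldenConj_sq
  exact reflection_mem_unitaryGroup hφ

lemma norm_fibF_one_zero : ‖fibF 1 0‖ = 1 / √φ := by
  simp [fibF, abs_of_nonneg]

theorem stmt_11 (N : ℕ → Matrix (Fin 2) (Fin 2) ℂ)
    (h0 : N 0 = fibF)
    (hrec : ∀ j : ℕ, N (j + 1) =
      N j * fibR * (N j)ᴴ * fibR^3 * N j * fibR^3 * (N j)ᴴ * fibR * N j) :
    ∀ j : ℕ, ‖(N j) 1 0‖ = (1 / Real.sqrt ((1 + Real.sqrt 5) / 2))^(5^j) := by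
  have hstep : ∀ j, N (j + 1) = braidWord fibR (N j) (N j)ᴴ := hrec
  have hU : ∀ j, N j ∈ unitaryGroup (Fin 2) ℂ := by
    intro j
    induction j with
    | zero => exact h0 ▸ fibF_mem_unitaryGroup
    | succ j ih => exact (hstep j).symm ▸ braidWord_mem_unitaryGroup fibR_mem_unitaryGroup ih
  have hz :=
    cyclotomic_ten_eq_zero_of_pow_five_eq_neg_one exp_pi_div_five_pow_five exp_pi_div_five_ne_neg_one
  intro j
  induction j with
  | zero => rw [h0, norm_fibF_one_zero, pow_zero, pow_one]
  | succ j ih =>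
    rw [hstep j, fibR_eq_braidMatrix,
      norm_braidWord_conjTranspose_apply_one_zero hz exp_pi_div_five_mem_unitary (hU j), ih,
      ← pow_mul, pow_succ]
end

section
/- Let ω = e^{iπ/5}, let V = [[cos θ, sin θ],[sin θ, −cos θ]] for θ real (so V = V† = V^{−1}), and let D₁ = diag(1,ω) and D₂ = diag(1,−ω^{−2}). Then |(V D₁ V D₂ V D₂ V D₁ V)₂₁| = |sin θ|⁵. -/
open Matrix Complex

theorem stmt_17 (θ : ℝ) :
    let ω : ℂ := Complex.exp (Real.pi * Complex.I / 5)
    let V : Matrix (Fin 2) (Fin 2) ℂ :=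
      !![(Real.cos θ : ℂ), (Real.sin θ : ℂ); (Real.sin θ : ℂ), -(Real.cos θ : ℂ)]
    let D₁ : Matrix (Fin 2) (Fin 2) ℂ := !![(1 : ℂ), 0; 0, ω]
    let D₂ : Matrix (Fin 2) (Fin 2) ℂ := !![(1 : ℂ), 0; 0, -(ω⁻¹)^2]
    ‖(V * D₁ * V * D₂ * V * D₂ * V * D₁ * V) 1 0‖ = |Real.sin θ|^5 := by
  intro ω V D₁ D₂
  have hωdef : ω = Complex.exp ((Real.pi / 5 : ℝ) * Complex.I) := by
    show Complex.exp _ = _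
    congr 1
    push_cast
    ring
  have hωne : ω ≠ 0 := Complex.exp_ne_zero _
  have hω5 : ω ^ 5 = -1 := by
    show Complex.exp _ ^ 5 = -1
    rw [← Complex.exp_nat_mul,
      show ((5 : ℕ) : ℂ) * (↑Real.pi * Complex.I / 5) = ↑Real.pi * Complex.I by
        push_cast; ring,
      Complex.exp_pi_mul_I]
  have h1ω : (1 : ℂ) + ω ≠ 0 := by
    intro h
    have him : ω.im = Real.sin (Real.pi / 5) := by
      rw [hωdef, Complex.exp_ofReal_mul_I_im]
    have hωeq : ω = -1 := by linear_combination h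
    have : Real.sin (Real.pi / 5) = 0 := by
      rw [← him, hωeq]
      simp
    have hpos : 0 < Real.sin (Real.pi / 5) := by
      apply Real.sin_pos_of_pos_of_lt_pi
      · positivity
      · linarith [Real.pi_pos]
    linarith
  have hP : 1 - ω + ω ^ 2 - ω ^ 3 + ω ^ 4 = 0 := by
    have h1 : (1 + ω) * (1 - ω + ω ^ 2 - ω ^ 3 + ω ^ 4) = 0 := by
      linear_combination hω5
    rcases mul_eq_zero.mp h1 with h | h
    · exact absurd h h1ω
    · exact h
  have hcs : Complex.cos θ ^ 2 + Complex.sin θ ^ 2 = 1 := Complex.cos_sq_add_sin_sq θ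
  have hentry : (V * D₁ * V * D₂ * V * D₂ * V * D₁ * V) 1 0
      = ω ^ 4 * (Real.sin θ : ℂ) ^ 5 := by
    simp only [V, D₁, D₂, Matrix.mul_apply, Fin.sum_univ_succ, Fin.sum_univ_zero,
      Matrix.cons_val', Matrix.cons_val_zero, Matrix.cons_val_one, Matrix.head_cons,
      Matrix.head_fin_const, Matrix.empty_val', Matrix.cons_val_fin_one,
      Matrix.of_apply, Matrix.cons_val_succ, Complex.ofReal_cos, Complex.ofReal_sin]
    field_simp
    linear_combination
      (- Complex.sin θ * ω ^ 3 - Complex.sin θ ^ 3 * ω ^ 2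
        - 2 * Complex.sin θ ^ 3 * ω ^ 3 - Complex.sin θ ^ 3 * ω ^ 4
        - Complex.sin θ ^ 5 * ω ^ 2 - Complex.sin θ ^ 5 * ω ^ 3
        - Complex.sin θ ^ 5 * ω ^ 4 - Complex.sin θ ^ 5 * ω ^ 5
        - Complex.sin θ ^ 5 * ω ^ 6
        + 2 * Complex.sin θ ^ 5 * ω ^ 4 + 4 * Complex.sin θ ^ 5 * ω ^ 3
        + 2 * Complex.sin θ ^ 5 * ω ^ 2 + 4 * Complex.sin θ ^ 3 * ω ^ 3 - 4 * Complex.sin θ ^ 5 * ω ^ 3) * hP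
      + (- Complex.sin θ * ω ^ 3 + Complex.sin θ * ω ^ 4 - Complex.sin θ * ω ^ 5
        + Complex.sin θ * ω ^ 6 - Complex.sin θ * ω ^ 7
        - Complex.sin θ * Complex.cos θ ^ 2 * ω ^ 3
        + Complex.sin θ * Complex.cos θ ^ 2 * ω ^ 4
        - Complex.sin θ * Complex.cos θ ^ 2 * ω ^ 5
        + Complex.sin θ * Complex.cos θ ^ 2 * ω ^ 6
        - Complex.sin θ * Complex.cos θ ^ 2 * ω ^ 7
        - Complex.sin θ ^ 3 * ω ^ 2 - Complex.sin θ ^ 3 * ω ^ 4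
        + Complex.sin θ ^ 3 * ω ^ 5 - Complex.sin θ ^ 3 * ω ^ 6
        - Complex.sin θ ^ 3 * ω ^ 8
        + 2 * Complex.sin θ ^ 3 * ω ^ 3 - 2 * Complex.sin θ ^ 3 * ω ^ 4
        + 2 * Complex.sin θ ^ 3 * ω ^ 5 - 2 * Complex.sin θ ^ 3 * ω ^ 6
        + 2 * Complex.sin θ ^ 3 * ω ^ 7) * hcs
      + ((-1:ℂ) * Complex.sin θ ^ 3 + (1:ℂ) * Complex.sin θ ^ 5 + (-1:ℂ) * Complex.sin θ ^ 1 * ω ^ 1 + (2:ℂ) * Complex.sin θ ^ 3 * ω ^ 1 + (-1:ℂ) * Complex.sin θ ^ 5 * ω ^ 1 + (1:ℂ) * Complex.sin θ ^ 1 * ω ^ 3 + (-2:ℂ) * Complex.sin θ ^ 3 * ω ^ 3 + (1:ℂ) * Complex.sin θ ^ 3 * ω ^ 4 + (-2:ℂ) * Complex.sin θ ^ 5 * ω ^ 4 + (1:ℂ) * Complex.sin θ ^ 5 * ω ^ 5 + (1:ℂ) * Complex.sin θ ^ 5 * ω ^ 6) * hP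
      + ((-1:ℂ) * Complex.sin θ ^ 3 + (-1:ℂ) * Complex.sin θ ^ 1 * ω ^ 1 + (2:ℂ) * Complex.sin θ ^ 3 * ω ^ 1 + (1:ℂ) * Complex.sin θ ^ 1 * ω ^ 2 + (-2:ℂ) * Complex.sin θ ^ 3 * ω ^ 2 + (1:ℂ) * Complex.sin θ ^ 3 * ω ^ 3 + (-1:ℂ) * Complex.sin θ ^ 3 * ω ^ 5 + (-1:ℂ) * Complex.sin θ ^ 1 * ω ^ 6 + (2:ℂ) * Complex.sin θ ^ 3 * ω ^ 6 + (1:ℂ) * Complex.sin θ ^ 1 * ω ^ 7 + (-2:ℂ) * Complex.sin θ ^ 3 * ω ^ 7 + (1:ℂ) * Complex.sin θ ^ 3 * ω ^ 8 + (-1:ℂ) * Complex.cos θ ^ 2 * Complex.sin θ ^ 1 * ω ^ 1 + (1:ℂ) * Complex.cos θ ^ 2 * Complex.sin θ ^ 1 * ω ^ 2 + (-1:ℂ) * Complex.cos θ ^ 2 * Complex.sin θ ^ 1 * ω ^ 6 + (1:ℂ) * Complex.cos θ ^ 2 * Complex.sin θ ^ 1 * ω ^ 7) * hcs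
  rw [hentry, norm_mul, norm_pow, norm_pow]
  have hω1 : ‖ω‖ = 1 := by
    rw [hωdef]
    exact Complex.norm_exp_ofReal_mul_I _
  rw [hω1, Complex.norm_real, Real.norm_eq_abs]
  ring
end
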